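/- The function f(x) = (3x/sin x + cos x − 4)/(x³·sin x) is increasing on (0, π/2), with limit 1/10 as x → 0⁺ and limit (12π − 32)/π³ as x → π/2⁻. -/

import Mathlib

/-!
Write the function as `N x / (x ^ 3 * sin x ^ 2)` with `N x = 3 x + sin x cos x - 4 sin x`.
Its derivative is `x ^ 2 sin x · g x / (x ^ 3 sin x ^ 2) ^ 2`, where
`g = s (12 s - 7 x) + c (4 x s - 6 x ^ 2 - 3 s ^ 2)` (`s = sin x`, `c = cos x`).
The bracket after `c` is negative since `s ≤ x`, so `c` may be replaced by its degree-8
Taylor upper bound `C`. The result is a quadratic `q` in `s` that is increasing to the right of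
the degree-7 Taylor lower bound `S ≤ s`, hence `g ≥ q(S)`, a polynomial in `x` that is positive
on `(0, π/2)`.
All alternating Taylor bounds of `sin` and `cos` on `[0, ∞)` follow from `cos ≤ 1` by repeated
integration. The same bounds give `N x = x ^ 5 / 10 + O(x ^ 7)`, hence the limit at `0`;
at `π / 2` the function is continuous.
-/

open Real Filter Set Finset Nat Topology

noncomputable section

def sinTaylor (n : ℕ) (x : ℝ) : ℝ :=
  ∑ k ∈ range n, (-1) ^ k * x ^ (2 * k + 1) / (2 * k + 1)!

def cosTaylor (n : ℕ) (x : ℝ) : ℝ :=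
  ∑ k ∈ range n, (-1) ^ k * x ^ (2 * k) / (2 * k)!

theorem sinTaylor_zero_right (n : ℕ) : sinTaylor n 0 = 0 := by
  simp [sinTaylor]

theorem cosTaylor_succ (n : ℕ) (x : ℝ) :
    cosTaylor (n + 1) x = 1 - ∑ k ∈ range n, (-1) ^ k * x ^ (2 * k + 2) / (2 * k + 2)! := by
  simp [cosTaylor, Finset.sum_range_succ', pow_succ, mul_add, sub_eq_add_neg,
    ← Finset.sum_neg_distrib, neg_div, add_comm]

theorem cosTaylor_succ_zero_right (n : ℕ) : cosTaylor (n + 1) 0 = 1 := by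
  simp [cosTaylor_succ]

theorem hasDerivAt_sinTaylor (n : ℕ) (x : ℝ) :
    HasDerivAt (sinTaylor n) (cosTaylor n x) x := by
  unfold sinTaylor cosTaylor
  refine HasDerivAt.fun_sum fun k _ => ?_
  refine (((hasDerivAt_pow (2 * k + 1) x).const_mul ((-1 : ℝ) ^ k)).div_const
    ((2 * k + 1)! : ℝ)).congr_deriv ?_
  rw [Nat.factorial_succ]
  push_cast
  field_simp

theorem hasDerivAt_cosTaylor_succ (n : ℕ) (x : ℝ) :
    HasDerivAt (cosTaylor (n + 1)) (-sinTaylor n x) x := by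
  simp only [funext (cosTaylor_succ n), sinTaylor]
  refine ((HasDerivAt.fun_sum (u := range n) fun k _ =>
    ((hasDerivAt_pow (2 * k + 2) x).const_mul ((-1 : ℝ) ^ k)).div_const
      ((2 * k + 2)! : ℝ)).const_sub 1).congr_deriv ?_
  rw [neg_inj]
  refine Finset.sum_congr rfl fun k _ => ?_
  rw [Nat.factorial_succ]
  push_cast
  field_simp
  ring

theorem nonneg_of_hasDerivAt_nonneg {f f' : ℝ → ℝ} (hf : ∀ x, HasDerivAt f (f' x) x)
    (hf₀ : f 0 = 0) (hf' : ∀ x, 0 ≤ x → 0 ≤ f' x) {x : ℝ} (hx : 0 ≤ x) :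
    0 ≤ f x := by
  have hmono : MonotoneOn f (Ici 0) :=
    monotoneOn_of_hasDerivWithinAt_nonneg (convex_Ici 0)
      (fun y _ => (hf y).continuousAt.continuousWithinAt)
      (fun y _ => (hf y).hasDerivWithinAt)
      (fun y hy => hf' y (interior_subset hy))
  simpa [hf₀] using hmono self_mem_Ici hx hx

theorem sinTaylor_cosTaylor_alternating_bounds (n : ℕ) {x : ℝ} (hx : 0 ≤ x) :
    0 ≤ (-1) ^ n * (cosTaylor (n + 1) x - cos x) ∧
      0 ≤ (-1) ^ n * (sinTaylor (n + 1) x - sin x) := by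
  induction n generalizing x with
  | zero => simpa [cosTaylor, sinTaylor] using ⟨cos_le_one x, sin_le hx⟩
  | succ n ih =>
    have hcos {y : ℝ} (hy : 0 ≤ y) : 0 ≤ (-1) ^ (n + 1) * (cosTaylor (n + 2) y - cos y) :=
      nonneg_of_hasDerivAt_nonneg
        (fun z => (((hasDerivAt_cosTaylor_succ (n + 1) z).sub (hasDerivAt_cos z)).const_mul
          ((-1 : ℝ) ^ (n + 1))).congr_deriv (by ring))
        (by simp [cosTaylor_succ_zero_right]) (fun z hz => (ih hz).2) hy
    exact ⟨hcos hx, nonneg_of_hasDerivAt_nonneg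
      (fun z => ((hasDerivAt_sinTaylor (n + 2) z).sub (hasDerivAt_sin z)).const_mul _)
      (by simp [sinTaylor_zero_right]) (fun z hz => hcos hz) hx⟩

theorem sin_le_sinTaylor_of_even {n : ℕ} (hn : Even n) {x : ℝ} (hx : 0 ≤ x) :
    sin x ≤ sinTaylor (n + 1) x := by
  simpa [hn.neg_one_pow] using (sinTaylor_cosTaylor_alternating_bounds n hx).2

theorem sinTaylor_le_sin_of_odd {n : ℕ} (hn : Odd n) {x : ℝ} (hx : 0 ≤ x) :
    sinTaylor (n + 1) x ≤ sin x := by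
  simpa [hn.neg_one_pow] using (sinTaylor_cosTaylor_alternating_bounds n hx).2

theorem cos_le_cosTaylor_of_even {n : ℕ} (hn : Even n) {x : ℝ} (hx : 0 ≤ x) :
    cos x ≤ cosTaylor (n + 1) x := by
  simpa [hn.neg_one_pow] using (sinTaylor_cosTaylor_alternating_bounds n hx).1

theorem sinTaylor_three (x : ℝ) : sinTaylor 3 x = x - x ^ 3 / 6 + x ^ 5 / 120 := by
  norm_num [sinTaylor, Finset.sum_range_succ, Nat.factorial]
  ring

theorem sinTaylor_four (x : ℝ) :
    sinTaylor 4 x = x - x ^ 3 / 6 + x ^ 5 / 120 - x ^ 7 / 5040 := by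
  norm_num [sinTaylor, Finset.sum_range_succ, Nat.factorial]
  ring

theorem cosTaylor_five (x : ℝ) :
    cosTaylor 5 x = 1 - x ^ 2 / 2 + x ^ 4 / 24 - x ^ 6 / 720 + x ^ 8 / 40320 := by
  norm_num [cosTaylor, Finset.sum_range_succ, Nat.factorial]
  ring

def cusaRatio (x : ℝ) : ℝ := (3 * x / sin x + cos x - 4) / (x ^ 3 * sin x)

def cusaNum (x : ℝ) : ℝ := 3 * x + sin x * cos x - 4 * sin x

theorem cusaRatio_eq {x : ℝ} (hs : sin x ≠ 0) :
    cusaRatio x = cusaNum x / (x ^ 3 * sin x ^ 2) := by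
  unfold cusaRatio cusaNum
  field_simp

def cusaDerivFactor (x : ℝ) : ℝ :=
  sin x * (12 * sin x - 7 * x) + cos x * (4 * x * sin x - 6 * x ^ 2 - 3 * sin x ^ 2)

theorem hasDerivAt_cusaNum_div {x : ℝ} (hx : x ≠ 0) (hs : sin x ≠ 0) :
    HasDerivAt (fun y => cusaNum y / (y ^ 3 * sin y ^ 2))
      (x ^ 2 * sin x * cusaDerivFactor x / (x ^ 3 * sin x ^ 2) ^ 2) x := by
  have hN : HasDerivAt cusaNum (3 + (cos x * cos x - sin x * sin x) - 4 * cos x) x := by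
    refine ((((hasDerivAt_id x).const_mul 3).add ((hasDerivAt_sin x).mul (hasDerivAt_cos x))).sub
      ((hasDerivAt_sin x).const_mul 4)).congr_deriv ?_
    ring
  have hD : HasDerivAt (fun y => y ^ 3 * sin y ^ 2)
      (3 * x ^ 2 * sin x ^ 2 + x ^ 3 * (2 * sin x * cos x)) x := by
    refine ((hasDerivAt_pow 3 x).mul ((hasDerivAt_sin x).pow 2)).congr_deriv ?_
    simp only [Pi.pow_apply]; push_cast; ring
  refine (hN.div hD (by positivity)).congr_deriv ?_
  unfold cusaNum cusaDerivFactor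
  linear_combination (-(x ^ 3 * sin x ^ 2) / (x ^ 3 * sin x ^ 2) ^ 2) * sin_sq_add_cos_sq x

/-- `cusaDerivFactor x` with `sin x` replaced by `t` and `cos x` by its Taylor upper bound. -/
def cusaQuadratic (x t : ℝ) : ℝ :=
  t * (12 * t - 7 * x) + cosTaylor 5 x * (4 * x * t - 6 * x ^ 2 - 3 * t ^ 2)

theorem cusaQuadratic_sinTaylor_pos {x : ℝ} (h0 : 0 < x) (hx : x < 1.5708) :
    0 < cusaQuadratic x (sinTaylor 4 x) := by
  rw [cusaQuadratic, sinTaylor_four, cosTaylor_five]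
  have hx2 : x ^ 2 < 2.468 := by nlinarith
  -- each `eᵢ` collects consecutive coefficients of the polynomial, read as `x ^ 8` times a
  -- polynomial in `x ^ 2`
  have e1 : (0 : ℝ) < 3 / 70 - 4777 / 604800 * x ^ 2 := by linarith
  have e2 : (0 : ℝ) ≤ 23 / 33600 - 1837 / 50803200 * x ^ 2 := by linarith
  have e3 : (0 : ℝ) ≤ 13 / 10368000 - 13 / 451584000 * x ^ 2 := by linarith
  have e4 : (0 : ℝ) ≤ 1 / 2438553600 - 1 / 341397504000 * x ^ 2 := by linarith
  linarith [mul_pos (pow_pos h0 8) e1, mul_nonneg (pow_pos h0 12).le e2,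
    mul_nonneg (pow_pos h0 16).le e3, mul_nonneg (pow_pos h0 20).le e4]

theorem cusaQuadratic_monotoneOn {x : ℝ} (h0 : 0 < x) (hx : x < 1.5708) :
    MonotoneOn (cusaQuadratic x) (Ici (sinTaylor 4 x)) := by
  have hx2 : x ^ 2 < 2.468 := by nlinarith
  have hx4 : x ^ 4 < 6.1 := by nlinarith
  have hlead : 0 ≤ 12 - 3 * cosTaylor 5 x := by
    rw [cosTaylor_five]
    nlinarith [pow_pos h0 2, pow_pos h0 4, pow_pos h0 6]
  have hvertex :
      0 < (12 - 3 * cosTaylor 5 x) * (2 * sinTaylor 4 x) + x * (4 * cosTaylor 5 x - 7) := by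
    rw [sinTaylor_four, cosTaylor_five]
    have e1 : (0 : ℝ) < 15 - 2 * x ^ 2 - 13 / 30 * x ^ 4 := by linarith
    have e2 : (0 : ℝ) ≤ 83 / 1260 - 83 / 20160 * x ^ 2 := by linarith
    have e3 : (0 : ℝ) ≤ 29 / 201600 - 1 / 345600 * x ^ 2 := by linarith
    linarith [mul_pos h0 e1, mul_nonneg (pow_pos h0 7).le e2,
      mul_nonneg (pow_pos h0 11).le e3, pow_pos h0 15]
  intro s (hs : sinTaylor 4 x ≤ s) t (ht : sinTaylor 4 x ≤ t) hst
  have hdiff : cusaQuadratic x t - cusaQuadratic x s =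
      (t - s) * ((12 - 3 * cosTaylor 5 x) * (s + t) + x * (4 * cosTaylor 5 x - 7)) := by
    unfold cusaQuadratic; ring
  have hslope : 0 ≤ (12 - 3 * cosTaylor 5 x) * (s + t) + x * (4 * cosTaylor 5 x - 7) := by
    nlinarith [mul_le_mul_of_nonneg_left (by linarith : 2 * sinTaylor 4 x ≤ s + t) hlead]
  rw [← sub_nonneg, hdiff]
  exact mul_nonneg (sub_nonneg.2 hst) hslope

theorem cusaDerivFactor_pos {x : ℝ} (h0 : 0 < x) (hx : x < π / 2) : 0 < cusaDerivFactor x := by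
  have hx' : x < 1.5708 := by linarith [pi_lt_d4]
  have hS : sinTaylor 4 x ≤ sin x := sinTaylor_le_sin_of_odd (by decide) h0.le
  have hC : cos x ≤ cosTaylor 5 x := cos_le_cosTaylor_of_even (by decide) h0.le
  have hB : 4 * x * sin x - 6 * x ^ 2 - 3 * sin x ^ 2 ≤ 0 := by
    nlinarith [sin_le h0.le, sin_pos_of_pos_of_lt_pi h0 (by linarith [pi_pos])]
  calc 0 < cusaQuadratic x (sinTaylor 4 x) := cusaQuadratic_sinTaylor_pos h0 hx'
    _ ≤ cusaQuadratic x (sin x) := cusaQuadratic_monotoneOn h0 hx' self_mem_Ici hS hS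
    _ ≤ cusaDerivFactor x := by
      have := mul_nonneg_of_nonpos_of_nonpos (sub_nonpos.2 hC) hB
      unfold cusaQuadratic cusaDerivFactor
      linarith

theorem strictMonoOn_cusaNum_div :
    StrictMonoOn (fun y => cusaNum y / (y ^ 3 * sin y ^ 2)) (Ioo 0 (π / 2)) := by
  have hsin {y : ℝ} (hy : y ∈ Ioo 0 (π / 2)) : 0 < sin y :=
    sin_pos_of_pos_of_lt_pi hy.1 (by linarith [hy.2, pi_pos])
  refine strictMonoOn_of_hasDerivWithinAt_pos (convex_Ioo 0 (π / 2))
    (f' := fun y => y ^ 2 * sin y * cusaDerivFactor y / (y ^ 3 * sin y ^ 2) ^ 2)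
    (fun y hy => (hasDerivAt_cusaNum_div hy.1.ne' (hsin hy).ne').continuousAt.continuousWithinAt)
    (fun y hy => ?_) (fun y hy => ?_) <;> rw [interior_Ioo] at hy
  · exact (hasDerivAt_cusaNum_div hy.1.ne' (hsin hy).ne').hasDerivWithinAt
  · have := cusaDerivFactor_pos hy.1 hy.2
    have := hsin hy
    have := hy.1
    positivity

theorem monotoneOn_cusaRatio : MonotoneOn cusaRatio (Ioo 0 (π / 2)) :=
  strictMonoOn_cusaNum_div.monotoneOn.congr fun _ hx =>
    (cusaRatio_eq (sin_pos_of_pos_of_lt_pi hx.1 (by linarith [hx.2, pi_pos])).ne').symm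

theorem abs_cusaNum_sub_le {x : ℝ} (hx : 0 ≤ x) : |cusaNum x - x ^ 5 / 10| ≤ x ^ 7 / 60 := by
  have h2x : 0 ≤ 2 * x := by linarith
  have hsin2 : sin x * cos x = sin (2 * x) / 2 := by rw [sin_two_mul]; ring
  have h1 := sin_le_sinTaylor_of_even (n := 2) (by decide) h2x
  have h2 := sinTaylor_le_sin_of_odd (n := 3) (by decide) h2x
  have h3 := sin_le_sinTaylor_of_even (n := 2) (by decide) hx
  have h4 := sinTaylor_le_sin_of_odd (n := 3) (by decide) hx
  rw [sinTaylor_three] at h1 h3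
  rw [sinTaylor_four] at h2 h4
  rw [cusaNum, hsin2, abs_le]
  constructor <;> nlinarith [pow_nonneg hx 7]

theorem tendsto_cusaNum_div_pow_five :
    Tendsto (fun x => cusaNum x / x ^ 5) (𝓝[>] 0) (𝓝 (1 / 10)) := by
  rw [tendsto_iff_norm_sub_tendsto_zero]
  refine squeeze_zero' (Eventually.of_forall fun _ => norm_nonneg _) ?_
    (show Tendsto (fun x : ℝ => x ^ 2 / 60) (𝓝[>] 0) (𝓝 0) from ?_)
  · filter_upwards [self_mem_nhdsWithin] with x (hx : 0 < x)
    rw [Real.norm_eq_abs, show cusaNum x / x ^ 5 - 1 / 10 = (cusaNum x - x ^ 5 / 10) / x ^ 5 by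
      field_simp, abs_div, abs_of_pos (pow_pos hx 5), div_le_iff₀ (pow_pos hx 5)]
    calc |cusaNum x - x ^ 5 / 10| ≤ x ^ 7 / 60 := abs_cusaNum_sub_le hx.le
      _ = x ^ 2 / 60 * x ^ 5 := by ring
  · exact tendsto_nhdsWithin_of_tendsto_nhds
      (by simpa using ((continuous_pow 2).div_const 60).tendsto (0 : ℝ))

theorem tendsto_cusaRatio_zero : Tendsto cusaRatio (𝓝[>] 0) (𝓝 (1 / 10)) := by
  have hsinc : Tendsto (fun x => sinc x ^ 2) (𝓝[>] 0) (𝓝 1) := by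
    simpa [sinc_zero] using
      ((continuous_sinc.fun_pow 2).tendsto 0).mono_left nhdsWithin_le_nhds
  have hlim := tendsto_cusaNum_div_pow_five.div hsinc one_ne_zero
  rw [div_one] at hlim
  refine hlim.congr' ?_
  filter_upwards [Ioo_mem_nhdsGT pi_pos] with x hx
  have hs : sin x ≠ 0 := (sin_pos_of_pos_of_lt_pi hx.1 hx.2).ne'
  rw [Pi.div_apply, cusaRatio_eq hs, sinc_of_ne_zero hx.1.ne']
  field_simp

theorem tendsto_cusaRatio_pi_div_two :
    Tendsto cusaRatio (𝓝[<] (π / 2)) (𝓝 ((12 * π - 32) / π ^ 3)) := by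
  have hcont : ContinuousAt cusaRatio (π / 2) := by
    unfold cusaRatio
    fun_prop (disch := simp [pi_ne_zero])
  have hval : cusaRatio (π / 2) = (12 * π - 32) / π ^ 3 := by
    rw [cusaRatio, sin_pi_div_two, cos_pi_div_two]
    field_simp
    ring
  simpa [hval] using hcont.continuousWithinAt.tendsto (s := Iio (π / 2))

end

theorem cusa_ratio_monotone :
    MonotoneOn
      (fun x : ℝ => (3 * x / Real.sin x + Real.cos x - 4) / (x ^ 3 * Real.sin x))
      (Set.Ioo 0 (π / 2)) ∧
    Tendsto
      (fun x : ℝ => (3 * x / Real.sin x + Real.cos x - 4) / (x ^ 3 * Real.sin x))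
      (nhdsWithin 0 (Set.Ioi 0)) (nhds (1 / 10)) ∧
    Tendsto
      (fun x : ℝ => (3 * x / Real.sin x + Real.cos x - 4) / (x ^ 3 * Real.sin x))
      (nhdsWithin (π / 2) (Set.Iio (π / 2))) (nhds ((12 * π - 32) / π ^ 3)) :=
  ⟨monotoneOn_cusaRatio, tendsto_cusaRatio_zero, tendsto_cusaRatio_pi_div_two⟩
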